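/- arXiv:2512.13585 — 2 statements merged into one kernel-verified Lean document; each statement's English description precedes it below -/
import Mathlib

section
/- For any odd integer n ≥ 11 such that n − 2 is a perfect square, the ordinary caterpillar C_{n−2}((n−1)/2, (n−3)/2 + √(n−2)) is transmission irregular. -/
/-!
Number the spine `0, …, 2p` and let the leaves hang from the centre `p` and from `q = p + r`,
where `2p + 1 = (r + 1)²`. The distance between two vertices of a caterpillar is the distance
of their feet on the spine plus one for every endpoint that is a leaf, so the transmission of a
vertex whose foot lies at offset `s` from the centre is, up to a common constant,
`s² + |s| + |s - r|`, plus `(r + 1)²` for a leaf. This function of `s` is injective for `r > 0`,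
and a spine vertex could only match a leaf if one of `(r + 1)² + 1`, `(r + 2)² - 2`,
`2 (r + 1)²` or twice an odd number were a perfect square.
-/

open SimpleGraph

variable {V : Type*}

/-- The transmission of a vertex `v`: the sum of distances from `v` to all vertices. -/
noncomputable def transmission (G : SimpleGraph V) [Fintype V] (v : V) : ℕ :=
  ∑ u : V, G.dist v u

/-- The Wiener index: the sum of distances over all unordered pairs of vertices. -/
noncomputable def wienerIndex (G : SimpleGraph V) [Fintype V] : ℕ :=
  (∑ u : V, ∑ w : V, G.dist u w) / 2

/-- A graph on at least two vertices is transmission irregular if all of its vertices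
have pairwise distinct transmissions. -/
def TransIrregular (G : SimpleGraph V) [Fintype V] : Prop :=
  2 ≤ Fintype.card V ∧ Function.Injective (transmission G)

/-- The degree of a vertex. -/
noncomputable def vertexDegree (G : SimpleGraph V) (v : V) : ℕ :=
  Nat.card (G.neighborSet v)

/-- A natural number is a perfect square. -/
def IsPerfectSquare (m : ℕ) : Prop := ∃ t : ℕ, m = t * t

/-- The starlike tree `S(a, b, c)`: three pendent paths of lengths `a`, `b`, `c`
emanating from a common central vertex (vertex `0`).  The first branch consists of the
vertices `1, …, a`, the second of `a+1, …, a+b` and the third of `a+b+1, …, a+b+c`. -/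
def starlike (a b c : ℕ) : SimpleGraph (Fin (a + b + c + 1)) :=
  SimpleGraph.fromRel (fun x y =>
    (y.val = x.val + 1 ∧ x.val ≠ a ∧ x.val ≠ a + b) ∨
    (x.val = 0 ∧ (y.val = a + 1 ∨ y.val = a + b + 1)))

/-- The ordinary caterpillar `C_m(a, b)`: the path `v_1 v_2 ⋯ v_m` (vertices `0, …, m-1`)
together with one new leaf attached to `v_a` (the vertex `m`, attached to `a-1`) and one new
leaf attached to `v_b` (the vertex `m+1`, attached to `b-1`). -/
def caterpillar2 (m a b : ℕ) : SimpleGraph (Fin (m + 2)) :=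
  SimpleGraph.fromRel (fun x y =>
    (y.val = x.val + 1 ∧ y.val < m) ∨
    (x.val = a - 1 ∧ y.val = m) ∨
    (x.val = b - 1 ∧ y.val = m + 1))

/-- The variant caterpillar `C_m(a, 2; b, 1)`: the path `v_1 v_2 ⋯ v_m`
(vertices `0, …, m-1`) together with a pendent path of length two attached to `v_a`
(vertices `m` and `m+1`) and a pendent path of length one attached to `v_b`
(the vertex `m+2`). -/
def varCaterpillar (m a b : ℕ) : SimpleGraph (Fin (m + 3)) :=
  SimpleGraph.fromRel (fun x y =>
    (y.val = x.val + 1 ∧ y.val < m) ∨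
    (x.val = a - 1 ∧ y.val = m) ∨
    (x.val = m ∧ y.val = m + 1) ∨
    (x.val = b - 1 ∧ y.val = m + 2))

/-- `T` is a transmission irregular tree of order `n` attaining the maximum Wiener
index among all transmission irregular trees of order `n`. -/
def MaxTITree (n : ℕ) (T : SimpleGraph (Fin n)) : Prop :=
  T.IsTree ∧ TransIrregular T ∧
    ∀ T' : SimpleGraph (Fin n), T'.IsTree → TransIrregular T' →
      wienerIndex T' ≤ wienerIndex T

/-- The graph `X` is, up to isomorphism, the unique transmission irregular tree of
order `n` attaining the maximum Wiener index. -/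
def UniqueMaxTITree (n : ℕ) {m : ℕ} (X : SimpleGraph (Fin m)) : Prop :=
  (∃ T : SimpleGraph (Fin n), MaxTITree n T ∧ Nonempty (T ≃g X)) ∧
    ∀ T : SimpleGraph (Fin n), MaxTITree n T → Nonempty (T ≃g X)

namespace SimpleGraph

variable {G : SimpleGraph V} {f : V → ℤ}

theorem Walk.le_add_length (hf : ∀ u v, G.Adj u v → f v ≤ f u + 1) {u v : V} (w : G.Walk u v) :
    f v ≤ f u + w.length := by
  induction w with
  | nil => simp
  | cons h _ ih => push_cast [Walk.length_cons]; linarith [hf _ _ h]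

theorem Reachable.le_add_dist (hf : ∀ u v, G.Adj u v → f v ≤ f u + 1) {u v : V}
    (h : G.Reachable u v) : f v ≤ f u + G.dist u v := by
  obtain ⟨w, hw⟩ := h.exists_walk_length_eq_dist
  simpa [hw] using w.le_add_length hf

end SimpleGraph

theorem two_mul_sum_range_abs_sub {n c : ℕ} (hc : c ≤ n) :
    2 * ∑ j ∈ Finset.range n, |(c : ℤ) - j| = c * (c + 1) + (n - c) * (n - c - 1) := by
  induction n generalizing c with
  | zero => simp [show c = 0 by omega]
  | succ n ih =>
    rcases c with _ | c
    · have ih₀ := ih (Nat.zero_le n)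
      simp only [Finset.sum_range_succ, CharP.cast_eq_zero, zero_sub, abs_neg, Nat.abs_cast]
        at ih₀ ⊢
      push_cast
      linear_combination ih₀
    · have ih₁ := ih (c := c) (by omega)
      have hshift (k : ℕ) : |((c + 1 : ℕ) : ℤ) - ((k + 1 : ℕ) : ℤ)| = |(c : ℤ) - k| := by
        push_cast; ring_nf
      rw [Finset.sum_range_succ', mul_add, Finset.sum_congr rfl fun k _ => hshift k, ih₁]
      push_cast
      rw [sub_zero, abs_of_nonneg (by positivity)]
      ring

theorem Int.not_exists_sq {m n : ℤ} (hm : 0 ≤ m) (hl : m * m < n) (hr : n < (m + 1) * (m + 1)) :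
    ¬∃ t, t * t = n := by
  rintro ⟨t, rfl⟩
  rw [← abs_mul_abs_self t] at hl hr
  have h₁ : m < |t| := by nlinarith [abs_nonneg t]
  have h₂ : |t| < m + 1 := by nlinarith [abs_nonneg t]
  omega

theorem Int.sq_ne_two_mul_sq {a b : ℤ} (hb : b ≠ 0) : a ^ 2 ≠ 2 * b ^ 2 := by
  intro h
  have hsq : IsSquare (2 : ℚ) := ⟨a / b, by field_simp; exact_mod_cast h.symm⟩
  exact (irrational_sqrt_ratCast_iff.mp (by exact_mod_cast irrational_sqrt_two)).1 hsq

/-- Up to an additive constant, the transmission of the spine vertex at offset `s` from the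
centre of an odd path whose two leaves hang at offsets `0` and `r`. -/
def excess (r s : ℤ) : ℤ := s ^ 2 + |s| + |s - r|

section excess

variable {r : ℤ}

lemma excess_of_nonpos {s : ℤ} (hr : 0 ≤ r) (hs : s ≤ 0) : excess r s = (1 - s) ^ 2 + r - 1 := by
  rw [excess, abs_of_nonpos hs, abs_of_nonpos (by linarith)]; ring

lemma excess_of_mem_Icc {s : ℤ} (hs₀ : 0 ≤ s) (hsr : s ≤ r) : excess r s = s ^ 2 + r := by
  rw [excess, abs_of_nonneg hs₀, abs_of_nonpos (by linarith)]; ring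

lemma excess_of_le {s : ℤ} (hr : 0 ≤ r) (hs : r ≤ s) : excess r s = (s + 1) ^ 2 - r - 1 := by
  rw [excess, abs_of_nonneg (by linarith), abs_of_nonneg (by linarith)]; ring

lemma excess_strictMonoOn (r : ℤ) : StrictMonoOn (excess r) (Set.Ici 0) := by
  intro a (ha : 0 ≤ a) b (hb : 0 ≤ b) hab
  have h := abs_sub_abs_le_abs_sub (a - r) (b - r)
  rw [show a - r - (b - r) = -(b - a) by ring, abs_neg, abs_of_pos (a := b - a) (by linarith)] at h
  simp only [excess, abs_of_nonneg ha, abs_of_nonneg hb]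
  nlinarith

lemma excess_strictAntiOn (r : ℤ) : StrictAntiOn (excess r) (Set.Iic 0) := by
  intro a (ha : a ≤ 0) b (hb : b ≤ 0) hab
  have h := abs_sub_abs_le_abs_sub (b - r) (a - r)
  rw [show b - r - (a - r) = b - a by ring, abs_of_pos (a := b - a) (by linarith)] at h
  simp only [excess, abs_of_nonpos ha, abs_of_nonpos hb]
  nlinarith

lemma excess_ne_of_neg_of_pos (hr : 0 < r) {a b : ℤ} (ha : a < 0) (hb : 0 < b) :
    excess r a ≠ excess r b := by
  rw [excess_of_nonpos hr.le ha.le]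
  intro h
  rcases le_total b r with hbr | hrb
  · -- `b ^ 2 = (1 - a) ^ 2 - 1` would lie strictly between `a ^ 2` and `(1 - a) ^ 2`
    rw [excess_of_mem_Icc hb.le hbr] at h
    exact Int.not_exists_sq (m := -a) (n := b * b) (by omega) (by nlinarith) (by nlinarith)
      ⟨b, rfl⟩
  · -- `(b + a) (b - a + 2) = 2 r`, and the two factors have the same parity
    rw [excess_of_le hr.le hrb] at h
    have key : (b + a) * (b - a + 2) = 2 * r := by linear_combination -h
    rcases lt_trichotomy (b + a) 1 with h₁ | h₁ | h₁
    · nlinarith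
    · rw [h₁] at key; omega
    · nlinarith

lemma excess_injective (hr : 0 < r) : Function.Injective (excess r) := by
  intro a b h
  by_contra hne
  wlog hab : a < b generalizing a b
  · exact this h.symm (Ne.symm hne) (lt_of_le_of_ne (not_lt.mp hab) (Ne.symm hne))
  rcases le_or_gt 0 a with ha | ha
  · exact (excess_strictMonoOn r ha (le_trans ha hab.le) hab).ne h
  rcases le_or_gt b 0 with hb | hb
  · exact (excess_strictAntiOn r ha.le hb hab).ne' h
  · exact excess_ne_of_neg_of_pos hr ha hb h

lemma excess_ne_excess_zero_add_sq (hr : 0 < r) (s : ℤ) :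
    excess r s ≠ excess r 0 + (r + 1) ^ 2 := by
  rw [excess_of_mem_Icc le_rfl hr.le]
  intro h
  rcases le_or_gt s 0 with hs | hs
  · rw [excess_of_nonpos hr.le hs] at h
    exact Int.not_exists_sq (m := r + 1) (by omega) (by nlinarith) (by nlinarith) ⟨1 - s, rfl⟩
  rcases le_total s r with hsr | hrs
  · rw [excess_of_mem_Icc hs.le hsr] at h
    nlinarith
  · rw [excess_of_le hr.le hrs] at h
    exact Int.not_exists_sq (m := r + 1) (by omega) (by nlinarith) (by nlinarith) ⟨s + 1, rfl⟩

lemma excess_ne_excess_self_add_sq (hr : 0 < r) (s : ℤ) :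
    excess r s ≠ excess r r + (r + 1) ^ 2 := by
  rw [excess_of_mem_Icc hr.le le_rfl]
  intro h
  rcases le_or_gt s 0 with hs | hs
  · -- `(1 - s) ^ 2 = 2 (r ^ 2 + r + 1)` is `2` modulo `4`
    rw [excess_of_nonpos hr.le hs] at h
    have h4 := congrArg (Int.cast : ℤ → ZMod 4) (show (1 - s) ^ 2 = 2 * (r ^ 2 + r + 1) by linarith)
    push_cast at h4
    generalize ((s : ℤ) : ZMod 4) = x at h4
    generalize ((r : ℤ) : ZMod 4) = y at h4
    revert x y; decide
  rcases le_total s r with hsr | hrs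
  · rw [excess_of_mem_Icc hs.le hsr] at h
    nlinarith
  · rw [excess_of_le hr.le hrs] at h
    exact Int.sq_ne_two_mul_sq (a := s + 1) (b := r + 1) (by omega) (by linarith)

end excess

namespace Caterpillar2

open Finset

/-- The spine vertex that `v` is, or hangs from. -/
def foot (m p q : ℕ) (v : Fin (m + 2)) : ℕ :=
  if v.val = m then p else if v.val = m + 1 then q else v.val

def height (m : ℕ) (v : Fin (m + 2)) : ℕ := if m ≤ v.val then 1 else 0

variable {m p q : ℕ}

-- `caterpillar2` numbers the attachment vertices from `1`, while `p` and `q` count from `0`.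
local notation "𝒞" => caterpillar2 m (p + 1) (q + 1)

lemma foot_lt (hp : p < m) (hq : q < m) (v : Fin (m + 2)) : foot m p q v < m := by
  unfold foot; split_ifs <;> omega

lemma natAbs_sub_foot_add_height_of_adj (hp : p < m) (hq : q < m) {u v : Fin (m + 2)}
    (h : (𝒞).Adj u v) :
    ((foot m p q u : ℤ) - foot m p q v).natAbs + height m u + height m v = 1 := by
  simp only [caterpillar2, fromRel_adj, Nat.add_sub_cancel, ne_eq, Fin.ext_iff] at h
  unfold foot height
  split_ifs <;> omega

lemma adj_succ {i : ℕ} (h : i + 1 < m) : (𝒞).Adj ⟨i, by omega⟩ ⟨i + 1, by omega⟩ := by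
  simp only [caterpillar2, fromRel_adj, ne_eq, Fin.ext_iff, true_and]
  omega

lemma adj_foot (hp : p < m) (hq : q < m) {v : Fin (m + 2)} (hv : m ≤ v.val) :
    (𝒞).Adj ⟨foot m p q v, by have := foot_lt hp hq v; omega⟩ v := by
  simp only [caterpillar2, fromRel_adj, ne_eq, Fin.ext_iff, foot]
  split_ifs <;> omega

lemma edist_spine_le {i : ℕ} : ∀ {k : ℕ} (h : i + k < m),
    (𝒞).edist ⟨i, by omega⟩ ⟨i + k, by omega⟩ ≤ k
  | 0, _ => by simp
  | k + 1, h => by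
    calc (𝒞).edist ⟨i, _⟩ ⟨i + (k + 1), _⟩
        ≤ (𝒞).edist ⟨i, _⟩ ⟨i + k, by omega⟩ + (𝒞).edist ⟨i + k, by omega⟩ ⟨i + k + 1, by omega⟩ :=
          (𝒞).edist_triangle
      _ ≤ k + 1 := by
        rw [edist_eq_one_iff_adj.mpr (adj_succ (by omega))]
        gcongr
        exact edist_spine_le (by omega)

lemma edist_spine_le_natAbs {i j : ℕ} (hi : i < m) (hj : j < m) :
    (𝒞).edist ⟨i, by omega⟩ ⟨j, by omega⟩ ≤ ((i : ℤ) - j).natAbs := by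
  wlog hij : i ≤ j generalizing i j
  · rw [edist_comm, ← Int.natAbs_neg, neg_sub]
    exact this hj hi (by omega)
  obtain ⟨k, rfl⟩ := Nat.exists_eq_add_of_le hij
  simpa using edist_spine_le (p := p) (q := q) hj

lemma edist_foot_le (hp : p < m) (hq : q < m) (v : Fin (m + 2)) :
    (𝒞).edist v ⟨foot m p q v, by have := foot_lt hp hq v; omega⟩ ≤ height m v := by
  by_cases hv : m ≤ v.val
  · rw [edist_comm, edist_eq_one_iff_adj.mpr (adj_foot hp hq hv), height, if_pos hv]
    rfl
  · have h : foot m p q v = v.val := by simp only [foot]; split_ifs <;> omega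
    simp [h]

lemma edist_le (hp : p < m) (hq : q < m) (u v : Fin (m + 2)) :
    (𝒞).edist u v ≤ (((foot m p q u : ℤ) - foot m p q v).natAbs + height m u + height m v : ℕ) := by
  have hu := foot_lt hp hq u
  have hv := foot_lt hp hq v
  calc (𝒞).edist u v
      ≤ (𝒞).edist u ⟨foot m p q u, by omega⟩
          + (𝒞).edist ⟨foot m p q u, by omega⟩ ⟨foot m p q v, by omega⟩
          + (𝒞).edist ⟨foot m p q v, by omega⟩ v :=
        (𝒞).edist_triangle.trans (by rw [add_assoc]; gcongr; exact (𝒞).edist_triangle)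
    _ ≤ height m u + ((foot m p q u : ℤ) - foot m p q v).natAbs + height m v := by
        gcongr
        · exact edist_foot_le hp hq u
        · exact edist_spine_le_natAbs hu hv
        · rw [edist_comm]; exact edist_foot_le hp hq v
    _ = _ := by push_cast; ring

def distance (m p q : ℕ) (u v : Fin (m + 2)) : ℕ :=
  if u = v then 0 else ((foot m p q u : ℤ) - foot m p q v).natAbs + height m u + height m v

lemma distance_le_distance_add_one_of_adj (hp : p < m) (hq : q < m) (u : Fin (m + 2))
    {v w : Fin (m + 2)} (h : (𝒞).Adj v w) : distance m p q u w ≤ distance m p q u v + 1 := by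
  have hvw := natAbs_sub_foot_add_height_of_adj hp hq h
  unfold distance
  by_cases huw : u = w
  · simp [huw]
  by_cases huv : u = v
  · subst huv; simp [huw, hvw]
  · simp only [huw, huv, if_false]
    omega

theorem dist_eq_distance (hp : p < m) (hq : q < m) (u v : Fin (m + 2)) :
    (𝒞).dist u v = distance m p q u v := by
  have hle : (𝒞).edist u v ≤ distance m p q u v := by
    unfold distance; split_ifs with h
    · simp [h]
    · exact edist_le hp hq u v
  have hreach : (𝒞).Reachable u v :=
    reachable_of_edist_ne_top (ne_top_of_le_ne_top (ENat.natCast_ne_top _) hle)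
  apply le_antisymm
  · exact_mod_cast hreach.coe_dist_eq_edist ▸ hle
  · have := hreach.le_add_dist (f := fun w => (distance m p q u w : ℤ))
      (fun v w h => by exact_mod_cast distance_le_distance_add_one_of_adj hp hq u h)
    simpa only [show distance m p q u u = 0 by simp [distance], Nat.cast_zero, zero_add,
      Nat.cast_le] using this

lemma sum_foot_height {M : Type*} [AddCommMonoid M] (F : ℕ → ℕ → M) :
    ∑ v, F (foot m p q v) (height m v) = ∑ j ∈ range m, F j 0 + F p 1 + F q 1 := by
  rw [Fin.sum_univ_castSucc, Fin.sum_univ_castSucc, ← Fin.sum_univ_eq_sum_range (F · 0)]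
  have hfoot (i : Fin m) : foot m p q i.castSucc.castSucc = i := by
    simp only [foot, Fin.val_castSucc]; split_ifs <;> omega
  have hheight (i : Fin m) : height m i.castSucc.castSucc = 0 := by simp [height]
  simp only [hfoot, hheight]
  simp [foot, height]

theorem transmission_eq (hp : p < m) (hq : q < m) (v : Fin (m + 2)) :
    (transmission 𝒞 v : ℤ) = ∑ j ∈ range m, |(foot m p q v : ℤ) - j| + |(foot m p q v : ℤ) - p|
      + |(foot m p q v : ℤ) - q| + m * height m v + 2 := by
  set g : Fin (m + 2) → ℤ := fun u =>
    |(foot m p q v : ℤ) - foot m p q u| + height m v + height m u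
  have hdist (u : Fin (m + 2)) : ((𝒞).dist v u : ℤ) = g u - if v = u then g u else 0 := by
    rw [dist_eq_distance hp hq, distance]
    split_ifs <;> simp [g]
  have hg : ∑ u, g u = ∑ j ∈ range m, (|(foot m p q v : ℤ) - j| + height m v)
      + (|(foot m p q v : ℤ) - p| + height m v + 1)
      + (|(foot m p q v : ℤ) - q| + height m v + 1) := by
    simpa [g] using sum_foot_height (m := m) (p := p) (q := q)
      (fun a b => |(foot m p q v : ℤ) - a| + height m v + b)
  simp only [transmission, Nat.cast_sum, hdist, sum_sub_distrib, sum_ite_eq, mem_univ, if_true, hg,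
    sum_add_distrib, sum_const, card_range, nsmul_eq_mul]
  simp [g]
  ring

lemma height_eq_zero_or (v : Fin (m + 2)) :
    height m v = 0 ∨ height m v = 1 ∧ (foot m p q v = p ∨ foot m p q v = q) := by
  unfold height foot; split_ifs <;> omega

lemma eq_of_foot_eq_of_height_eq (hpq : p ≠ q) {u v : Fin (m + 2)}
    (hf : foot m p q u = foot m p q v) (hh : height m u = height m v) : u = v := by
  unfold foot at hf; unfold height at hh
  ext; split_ifs at hf hh <;> omega

theorem transmission_eq_excess {r : ℕ} (hrp : r ≤ p) (v : Fin (2 * p + 1 + 2)) :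
    (transmission (caterpillar2 (2 * p + 1) (p + 1) (p + r + 1)) v : ℤ)
      = excess r ((foot (2 * p + 1) p (p + r) v : ℤ) - p) + (2 * p + 1) * height (2 * p + 1) v
        + (p * (p + 1) + 2) := by
  have hfoot := foot_lt (m := 2 * p + 1) (p := p) (q := p + r) (by omega) (by omega) v
  have hsum := two_mul_sum_range_abs_sub hfoot.le
  rw [transmission_eq (by omega) (by omega), excess]
  push_cast at hsum ⊢
  rw [sub_add_eq_sub_sub]
  linarith

theorem transIrregular_caterpillar2 {p r : ℕ} (hr : 0 < r) (hsq : 2 * p + 1 = (r + 1) ^ 2) :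
    TransIrregular (caterpillar2 (2 * p + 1) (p + 1) (p + r + 1)) := by
  have hrp : r ≤ p := by nlinarith
  refine ⟨by simp, fun u v huv => ?_⟩
  set s := fun w : Fin (2 * p + 1 + 2) => (foot (2 * p + 1) p (p + r) w : ℤ) - p
  have key : excess r (s u) + (r + 1) ^ 2 * height (2 * p + 1) u
      = excess r (s v) + (r + 1) ^ 2 * height (2 * p + 1) v := by
    have := congrArg (Nat.cast : ℕ → ℤ) huv
    rw [transmission_eq_excess hrp, transmission_eq_excess hrp] at this
    have hsqz : (2 * p + 1 : ℤ) = (r + 1) ^ 2 := by exact_mod_cast hsq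
    rw [hsqz] at this
    linarith
  have hleaf (w : Fin (2 * p + 1 + 2)) (hw : height (2 * p + 1) w = 1) (x : ℤ) :
      excess r x ≠ excess r (s w) + (r + 1) ^ 2 := by
    rcases height_eq_zero_or (p := p) (q := p + r) w with h | ⟨-, h | h⟩
    · omega
    · simpa [s, h] using excess_ne_excess_zero_add_sq (by exact_mod_cast hr) x
    · simpa [s, h] using excess_ne_excess_self_add_sq (by exact_mod_cast hr) x
  have hh : height (2 * p + 1) u = height (2 * p + 1) v := by
    rcases height_eq_zero_or (p := p) (q := p + r) u with hu | ⟨hu, -⟩ <;>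
      rcases height_eq_zero_or (p := p) (q := p + r) v with hv | ⟨hv, -⟩ <;>
      simp only [hu, hv] at key ⊢
    · exact absurd (by simpa using key) (hleaf v hv (s u))
    · exact absurd (by simpa using key.symm) (hleaf u hu (s v))
  rw [hh, add_left_inj] at key
  have hf : s u = s v := excess_injective (by exact_mod_cast hr) key
  exact eq_of_foot_eq_of_height_eq (p := p) (q := p + r) (by omega) (by simpa [s] using hf) hh

end Caterpillar2

/-- for any odd `n ≥ 11` with `n - 2` a perfect square, the ordinary
caterpillar `C_{n-2}((n-1)/2, (n-3)/2 + √(n-2))` is transmission irregular. -/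
theorem caterpillar_TI_of_odd_sq_sub_two (n : ℕ) (hodd : Odd n) (hn : 11 ≤ n)
    (hsq : IsPerfectSquare (n - 2)) :
    TransIrregular
      (caterpillar2 (n - 2) ((n - 1) / 2) ((n - 3) / 2 + Nat.sqrt (n - 2))) := by
  obtain ⟨t, ht⟩ := hsq
  obtain ⟨k, rfl⟩ := hodd
  have h2t : 2 ≤ t := by
    by_contra! h
    interval_cases t <;> omega
  have hm : 2 * k + 1 - 2 = 2 * (k - 1) + 1 := by omega
  have hp : (2 * k + 1 - 1) / 2 = k - 1 + 1 := by omega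
  have hq : (2 * k + 1 - 3) / 2 + t = k - 1 + (t - 1) + 1 := by omega
  rw [ht, Nat.sqrt_eq, ← ht, hm, hp, hq]
  exact Caterpillar2.transIrregular_caterpillar2 (by omega)
    (by rw [← hm, ht, Nat.sub_add_cancel (by omega), sq])
end

section
/- For any even integer n ≥ 14, the starlike tree S(n/2 − 1, n/2 − 2, 2) is transmission irregular if and only if none of the numbers 4n − 15, 4n − 7, 8n − 23 and 8n − 15 is a perfect square. -/
/-!
Label each vertex of `S(a, b, c)` by its arm and its depth (distance to the centre). Two vertices
at depths `i`, `t` are at distance `|i - t|` on a common arm and `i + t` otherwise, and summing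
gives `Tr(v) = Tr(centre) + i (i + a + b + c - 2ℓ)` for `v` at depth `i` on an arm of length `ℓ`.
For `S(b + 1, b, 2)`, `n = 2b + 4`, these excesses are `i(i+1)` and `j(j+3)` on the long arms and
`n - 4`, `2n - 6` on the short one. They increase along each arm and `i(i+1) ≠ j(j+3)`, so the
only possible coincidences are `i(i+1)` or `j(j+3)` equal to `n - 4` or `2n - 6`; completing the
square (`(2i+1)²`, `(2j+3)²`) turns these into `4n - 15`, `8n - 23`, `4n - 7`, `8n - 15` being
squares.
-/

open SimpleGraph

variable {V : Type*}

namespace SimpleGraph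

variable {G : SimpleGraph V}

theorem dist_eq_of_descent {x : V} (f : V → ℕ) (hx : f x = 0)
    (hadj : ∀ ⦃y z⦄, G.Adj y z → f z ≤ f y + 1)
    (hdesc : ∀ y, y ≠ x → ∃ z, G.Adj y z ∧ f z < f y) (y : V) :
    G.dist x y = f y := by
  have le_length : ∀ ⦃u w⦄ (p : G.Walk u w), f w ≤ f u + p.length := by
    intro u w p
    induction p with
    | nil => simp
    | cons h _ ih => have := hadj h; simp only [Walk.length_cons]; omega
  have exists_walk (y : V) : ∃ p : G.Walk y x, p.length ≤ f y := by
    induction h : f y using Nat.strong_induction_on generalizing y with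
    | _ m ih =>
      by_cases hyx : y = x
      · exact hyx ▸ ⟨Walk.nil, by simp⟩
      · obtain ⟨z, hyz, hz⟩ := hdesc y hyx
        obtain ⟨p, hp⟩ := ih (f z) (h ▸ hz) z rfl
        exact ⟨.cons hyz p, by simp only [Walk.length_cons]; omega⟩
  obtain ⟨p, hp⟩ := exists_walk y
  obtain ⟨q, hq⟩ := Reachable.exists_walk_length_eq_dist ⟨p.reverse⟩
  have := le_length q
  have := G.dist_le p.reverse
  rw [Walk.length_reverse] at this
  omega

end SimpleGraph

theorem isPerfectSquare_four_mul_add_one_iff (m : ℕ) :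
    IsPerfectSquare (4 * m + 1) ↔ ∃ i, m = i * (i + 1) := by
  constructor
  · rintro ⟨t, ht⟩
    obtain ⟨i, rfl | rfl⟩ := Nat.even_or_odd' t
    · exfalso
      have : 4 * m + 1 = 4 * (i * i) := by rw [ht]; ring
      omega
    · refine ⟨i, ?_⟩
      have : 4 * m + 1 = 4 * (i * (i + 1)) + 1 := by rw [ht]; ring
      omega
  · rintro ⟨i, rfl⟩
    exact ⟨2 * i + 1, by ring⟩

theorem isPerfectSquare_four_mul_add_nine_iff (m : ℕ) :
    IsPerfectSquare (4 * m + 9) ↔ ∃ j, m = j * (j + 3) := by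
  constructor
  · rintro ⟨t, ht⟩
    obtain ⟨i, rfl | rfl⟩ := Nat.even_or_odd' t
    · exfalso
      have : 4 * m + 9 = 4 * (i * i) := by rw [ht]; ring
      omega
    · have hi : i ≠ 0 := by rintro rfl; omega
      obtain ⟨j, rfl⟩ : ∃ j, i = j + 1 := ⟨i - 1, by omega⟩
      refine ⟨j, ?_⟩
      have : 4 * m + 9 = 4 * (j * (j + 3)) + 9 := by rw [ht]; ring
      omega
  · rintro ⟨j, rfl⟩
    exact ⟨2 * j + 3, by ring⟩

theorem sum_range_dist_sub_of_le {i ℓ : ℕ} (h : i ≤ ℓ) :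
    ∑ t ∈ Finset.range ℓ, ((Nat.dist i (t + 1) : ℤ) - (t + 1)) = i * (i - 1 - ℓ) := by
  have below : ∀ ℓ ≤ i,
      ∑ t ∈ Finset.range ℓ, ((Nat.dist i (t + 1) : ℤ) - (t + 1)) = ℓ * (i - ℓ - 1) := by
    intro ℓ hℓ
    induction ℓ with
    | zero => simp
    | succ ℓ ih =>
      rw [Finset.sum_range_succ, ih (by omega), Nat.dist_eq_sub_of_le_right (by omega)]
      push_cast [show ℓ + 1 ≤ i by omega]
      ring
  induction ℓ, h using Nat.le_induction with
  | base => rw [below i le_rfl]; ring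
  | succ ℓ hℓ ih =>
    rw [Finset.sum_range_succ, ih, Nat.dist_eq_sub_of_le (by omega)]
    push_cast [show i ≤ ℓ + 1 by omega]
    ring

theorem mul_add_one_ne_mul_add_three {i j : ℕ} (hj : 1 ≤ j) : i * (i + 1) ≠ j * (j + 3) := by
  intro h
  rcases le_or_gt i j with hij | hij <;> nlinarith

namespace Starlike

open Finset

/- Vertex `m` of `starlike a b c` lies on arm `arm a b m ∈ {1, 2, 3}` (`0` for the centre), at
distance `depth a b m` from the centre. -/
def arm (a b m : ℕ) : ℕ := if m = 0 then 0 else if m ≤ a then 1 else if m ≤ a + b then 2 else 3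

def depth (a b m : ℕ) : ℕ := if m ≤ a then m else if m ≤ a + b then m - a else m - (a + b)

def armLength (a b c s : ℕ) : ℕ := if s = 1 then a else if s = 2 then b else c

def armStart (a b s : ℕ) : ℕ := if s = 1 then 0 else if s = 2 then a else a + b

def coords (a b c : ℕ) : Set (ℕ × ℕ) :=
  {p | p = (0, 0) ∨ (1 ≤ p.1 ∧ p.1 ≤ 3 ∧ 1 ≤ p.2 ∧ p.2 ≤ armLength a b c p.1)}

def pathDist (s i k t : ℕ) : ℕ := if s = k then Nat.dist i t else i + t

def starDist (a b x y : ℕ) : ℕ := pathDist (arm a b x) (depth a b x) (arm a b y) (depth a b y)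

def excess (a b c s i : ℕ) : ℤ := i * (i + a + b + c - 2 * armLength a b c s)

variable {a b c : ℕ}

theorem pathDist_triangle (s i k t r u : ℕ) :
    pathDist s i r u ≤ pathDist s i k t + pathDist k t r u := by
  unfold pathDist Nat.dist
  split_ifs <;> omega

theorem pathDist_zero_zero (k t : ℕ) : pathDist 0 0 k t = t := by
  unfold pathDist Nat.dist
  split_ifs <;> omega

@[simp] theorem arm_zero : arm a b 0 = 0 := by simp [arm]

@[simp] theorem depth_zero : depth a b 0 = 0 := by simp [depth]

theorem mem_coords {s i : ℕ} :
    (s, i) ∈ coords a b c ↔ s = 0 ∧ i = 0 ∨ 1 ≤ s ∧ s ≤ 3 ∧ 1 ≤ i ∧ i ≤ armLength a b c s := by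
  simp [coords]

theorem coords_mem {m : ℕ} (hm : m ≤ a + b + c) : (arm a b m, depth a b m) ∈ coords a b c := by
  rw [mem_coords]
  unfold arm depth armLength
  split_ifs <;> omega

theorem eq_of_arm_eq_of_depth_eq {m m' : ℕ} (harm : arm a b m = arm a b m')
    (hdepth : depth a b m = depth a b m') : m = m' := by
  unfold arm at harm; unfold depth at hdepth
  split_ifs at harm hdepth <;> omega

theorem arm_armStart_add {s i : ℕ} (hs : 1 ≤ s ∧ s ≤ 3) (hi : 1 ≤ i ∧ i ≤ armLength a b c s) :
    arm a b (armStart a b s + i) = s ∧ depth a b (armStart a b s + i) = i ∧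
      armStart a b s + i ≤ a + b + c := by
  unfold arm depth armStart; unfold armLength at hi
  split_ifs at hi ⊢ <;> omega

theorem range_coords :
    Set.range (fun x : Fin (a + b + c + 1) => (arm a b x, depth a b x)) = coords a b c := by
  ext ⟨s, i⟩
  constructor
  · rintro ⟨x, hx⟩
    rw [← hx]
    exact coords_mem (by omega)
  · intro h
    rcases mem_coords.1 h with ⟨rfl, rfl⟩ | ⟨hs1, hs3, hi1, hi⟩
    · exact ⟨0, by simp⟩
    · obtain ⟨harm, hdepth, hle⟩ := arm_armStart_add (c := c) ⟨hs1, hs3⟩ ⟨hi1, hi⟩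
      exact ⟨⟨armStart a b s + i, by omega⟩, by simp [harm, hdepth]⟩

theorem adj_iff {x y : Fin (a + b + c + 1)} :
    (starlike a b c).Adj x y ↔ starDist a b x y = 1 := by
  have := x.isLt; have := y.isLt
  simp only [starlike, SimpleGraph.fromRel_adj, ne_eq, Fin.ext_iff]
  unfold starDist pathDist arm depth Nat.dist
  split_ifs <;> omega

theorem exists_adj_starDist_lt {x y : Fin (a + b + c + 1)} (hyx : y ≠ x) :
    ∃ z, (starlike a b c).Adj y z ∧ starDist a b x z < starDist a b x y := by
  have hx := coords_mem (a := a) (b := b) (c := c) (m := x) (by omega)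
  have hy := coords_mem (a := a) (b := b) (c := c) (m := y) (by omega)
  rw [mem_coords] at hx hy
  simp only [adj_iff, starDist]
  set s := arm a b x
  set i := depth a b x
  set k := arm a b y
  set t := depth a b y
  have hne : ¬(k = s ∧ t = i) := fun h => hyx (Fin.ext (eq_of_arm_eq_of_depth_eq h.1 h.2))
  -- If `y` lies between the centre and `x`, step towards `x`; otherwise step towards the centre.
  by_cases htoward : t < i ∧ (k = s ∨ t = 0)
  · obtain ⟨harm, hdepth, hle⟩ :=
      arm_armStart_add (a := a) (b := b) (c := c) (s := s) (i := t + 1) (by omega) (by omega)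
    refine ⟨⟨armStart a b s + (t + 1), by omega⟩, ?_⟩
    simp only [harm, hdepth]
    unfold pathDist Nat.dist
    split_ifs <;> omega
  · by_cases ht : t = 1
    · refine ⟨0, ?_⟩
      simp only [Fin.val_zero, arm_zero, depth_zero]
      unfold pathDist Nat.dist
      split_ifs <;> omega
    · obtain ⟨harm, hdepth, hle⟩ :=
        arm_armStart_add (a := a) (b := b) (c := c) (s := k) (i := t - 1) (by omega) (by omega)
      refine ⟨⟨armStart a b k + (t - 1), by omega⟩, ?_⟩
      simp only [harm, hdepth]
      unfold pathDist Nat.dist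
      split_ifs <;> omega

theorem dist_eq (x y : Fin (a + b + c + 1)) : (starlike a b c).dist x y = starDist a b x y := by
  refine SimpleGraph.dist_eq_of_descent (fun z : Fin (a + b + c + 1) => starDist a b x z)
    (by simp [starDist, pathDist])
    (fun y z hyz => ?_) (fun y hyx => exists_adj_starDist_lt hyx) y
  have := pathDist_triangle (arm a b x) (depth a b x) (arm a b y) (depth a b y)
    (arm a b z) (depth a b z)
  rw [adj_iff] at hyz
  unfold starDist at hyz ⊢
  omega

theorem sum_range_pathDist_sub {s i k ℓ : ℕ} (h : s = k → i ≤ ℓ) :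
    ∑ t ∈ range ℓ, ((pathDist s i k (t + 1) : ℤ) - (t + 1)) =
      if s = k then (i : ℤ) * (i - 1 - ℓ) else (ℓ : ℤ) * i := by
  unfold pathDist
  split_ifs with hsk
  · exact sum_range_dist_sub_of_le (h hsk)
  · simp

theorem sum_univ_eq_sum_arms {M : Type*} [AddCommMonoid M] (F : ℕ → ℕ → M) :
    ∑ y : Fin (a + b + c + 1), F (arm a b y) (depth a b y) =
      F 0 0 + ∑ t ∈ range a, F 1 (t + 1) + ∑ t ∈ range b, F 2 (t + 1) +
        ∑ t ∈ range c, F 3 (t + 1) := by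
  rw [Fin.sum_univ_eq_sum_range (fun m => F (arm a b m) (depth a b m)), sum_range_succ',
    sum_range_add, sum_range_add, arm_zero, depth_zero]
  have arm1 : ∀ t ∈ range a, F (arm a b (t + 1)) (depth a b (t + 1)) = F 1 (t + 1) := by
    intro t ht
    rw [mem_range] at ht
    congr 1 <;> simp only [arm, depth] <;> split_ifs <;> omega
  have arm2 : ∀ t ∈ range b,
      F (arm a b (a + t + 1)) (depth a b (a + t + 1)) = F 2 (t + 1) := by
    intro t ht
    rw [mem_range] at ht
    congr 1 <;> simp only [arm, depth] <;> split_ifs <;> omega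
  have arm3 : ∀ t ∈ range c,
      F (arm a b (a + b + t + 1)) (depth a b (a + b + t + 1)) = F 3 (t + 1) := by
    intro t _
    congr 1 <;> simp only [arm, depth] <;> split_ifs <;> omega
  rw [sum_congr rfl arm1, sum_congr rfl arm2, sum_congr rfl arm3]
  abel

theorem transmission_eq (x : Fin (a + b + c + 1)) :
    (transmission (starlike a b c) x : ℤ) =
      transmission (starlike a b c) 0 + excess a b c (arm a b x) (depth a b x) := by
  have hx := coords_mem (a := a) (b := b) (c := c) (m := x) (by omega)
  rw [mem_coords] at hx
  set s := arm a b x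
  set i := depth a b x
  have hlen : i ≤ armLength a b c s := by omega
  have hdiff : (transmission (starlike a b c) x : ℤ) - transmission (starlike a b c) 0 =
      ∑ y : Fin (a + b + c + 1), ((pathDist s i (arm a b y) (depth a b y) : ℤ) - depth a b y) := by
    unfold transmission
    push_cast
    rw [← sum_sub_distrib]
    refine sum_congr rfl fun y _ => ?_
    rw [dist_eq, dist_eq]
    simp only [starDist, Fin.val_zero, arm_zero, depth_zero, pathDist_zero_zero]
    rfl
  rw [← sub_eq_iff_eq_add', hdiff, sum_univ_eq_sum_arms (fun k t => (pathDist s i k t : ℤ) - t)]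
  push_cast
  rw [sum_range_pathDist_sub, sum_range_pathDist_sub, sum_range_pathDist_sub]
  · unfold excess armLength pathDist at *
    rcases hx with ⟨hs, hi⟩ | ⟨hs1, hs3, -, -⟩
    · simp [hs, hi]
    · interval_cases s <;> simp <;> ring
  all_goals intro h; rw [h] at hlen; simpa [armLength] using hlen

theorem transIrregular_iff_injOn (h : 0 < a + b + c) :
    TransIrregular (starlike a b c) ↔
      Set.InjOn (fun p => excess a b c p.1 p.2) (coords a b c) := by
  have hcoord : Function.Injective fun x : Fin (a + b + c + 1) => (arm a b x, depth a b x) :=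
    fun x y hxy =>
      Fin.ext (eq_of_arm_eq_of_depth_eq (congrArg Prod.fst hxy) (congrArg Prod.snd hxy))
  have htr : ∀ x y : Fin (a + b + c + 1),
      transmission (starlike a b c) x = transmission (starlike a b c) y ↔
        excess a b c (arm a b x) (depth a b x) = excess a b c (arm a b y) (depth a b y) := by
    intro x y
    rw [← Nat.cast_inj (R := ℤ), transmission_eq x, transmission_eq y, add_right_inj]
  rw [TransIrregular, Fintype.card_fin, ← range_coords]
  refine ⟨fun ⟨_, hinj⟩ => Function.Injective.injOn_range fun x y hxy => hinj ((htr x y).2 hxy),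
    fun hinj => ⟨by omega, fun x y hxy => hcoord ?_⟩⟩
  exact hinj (Set.mem_range_self x) (Set.mem_range_self y) ((htr x y).1 hxy)

@[simp] theorem excess_zero (s : ℕ) : excess a b c s 0 = 0 := by simp [excess]

theorem excess_strictMono {s : ℕ} (hs : 2 * armLength a b c s ≤ a + b + c) :
    StrictMono (excess a b c s) := by
  intro i j hij
  have : (i : ℤ) + 1 ≤ j := by omega
  unfold excess
  nlinarith

section SuccSelfTwo

variable {b : ℕ}

theorem excess_succ_self_two_one (i : ℕ) : excess (b + 1) b 2 1 i = i * (i + 1) := by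
  simp only [excess, armLength, ↓reduceIte]; push_cast; ring

theorem excess_succ_self_two_two (j : ℕ) : excess (b + 1) b 2 2 j = j * (j + 3) := by
  simp only [excess, armLength, Nat.reduceEqDiff, ↓reduceIte]; push_cast; ring

theorem excess_succ_self_two_three_one : excess (b + 1) b 2 3 1 = 2 * b := by
  simp only [excess, armLength, Nat.reduceEqDiff, ↓reduceIte]; push_cast; ring

theorem excess_succ_self_two_three_two : excess (b + 1) b 2 3 2 = 4 * b + 2 := by
  simp only [excess, armLength, Nat.reduceEqDiff, ↓reduceIte]; push_cast; ring

theorem injOn_excess_succ_self_two (hb : 1 ≤ b) (h1 : ¬ ∃ i, 2 * b = i * (i + 1))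
    (h2 : ¬ ∃ j, 2 * b = j * (j + 3)) (h3 : ¬ ∃ i, 4 * b + 2 = i * (i + 1))
    (h4 : ¬ ∃ j, 4 * b + 2 = j * (j + 3)) :
    Set.InjOn (fun p => excess (b + 1) b 2 p.1 p.2) (coords (b + 1) b 2) := by
  rintro ⟨s, i⟩ hp ⟨t, j⟩ hq heq
  wlog hst : s ≤ t generalizing s i t j
  · exact (this t j hq s i hp heq.symm (by omega)).symm
  have half (s : ℕ) : 2 * armLength (b + 1) b 2 s ≤ b + 1 + b + 2 := by
    unfold armLength; split_ifs <;> omega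
  dsimp only at heq
  rw [mem_coords] at hp hq
  rcases hst.eq_or_lt with rfl | hlt
  · rw [(excess_strictMono (half s)).injective heq]
  exfalso
  rcases hp with ⟨rfl, rfl⟩ | ⟨hs1, hs3, hi1, hi⟩
  · have := excess_strictMono (half t) (show 0 < j by omega)
    rw [excess_zero] at this heq
    exact this.ne heq
  obtain ⟨rfl, rfl⟩ | ⟨rfl, rfl⟩ | ⟨rfl, rfl⟩ :
      s = 1 ∧ t = 2 ∨ s = 1 ∧ t = 3 ∨ s = 2 ∧ t = 3 := by omega
  · rw [excess_succ_self_two_one, excess_succ_self_two_two] at heq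
    exact mul_add_one_ne_mul_add_three (show 1 ≤ j by omega) (by exact_mod_cast heq)
  all_goals
    obtain rfl | rfl : j = 1 ∨ j = 2 := by simp [armLength] at hq; omega
  · rw [excess_succ_self_two_one, excess_succ_self_two_three_one] at heq
    exact h1 ⟨i, by exact_mod_cast heq.symm⟩
  · rw [excess_succ_self_two_one, excess_succ_self_two_three_two] at heq
    exact h3 ⟨i, by exact_mod_cast heq.symm⟩
  · rw [excess_succ_self_two_two, excess_succ_self_two_three_one] at heq
    exact h2 ⟨i, by exact_mod_cast heq.symm⟩
  · rw [excess_succ_self_two_two, excess_succ_self_two_three_two] at heq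
    exact h4 ⟨i, by exact_mod_cast heq.symm⟩

theorem injOn_excess_succ_self_two_iff (hb : 1 ≤ b) :
    Set.InjOn (fun p => excess (b + 1) b 2 p.1 p.2) (coords (b + 1) b 2) ↔
      (¬ ∃ i, 2 * b = i * (i + 1)) ∧ (¬ ∃ j, 2 * b = j * (j + 3)) ∧
        (¬ ∃ i, 4 * b + 2 = i * (i + 1)) ∧ (¬ ∃ j, 4 * b + 2 = j * (j + 3)) := by
  refine ⟨fun hinj => ?_, fun ⟨h1, h2, h3, h4⟩ => injOn_excess_succ_self_two hb h1 h2 h3 h4⟩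
  have collide : ∀ {s i t j}, (s, i) ∈ coords (b + 1) b 2 → (t, j) ∈ coords (b + 1) b 2 →
      s ≠ t → excess (b + 1) b 2 s i = excess (b + 1) b 2 t j → False :=
    fun hp hq hst heq => hst (congrArg Prod.fst (hinj hp hq heq))
  refine ⟨fun ⟨i, hi⟩ => collide (s := 1) (i := i) (t := 3) (j := 1) ?_ ?_ (by omega) ?_,
    fun ⟨j, hj⟩ => collide (s := 2) (i := j) (t := 3) (j := 1) ?_ ?_ (by omega) ?_,
    fun ⟨i, hi⟩ => collide (s := 1) (i := i) (t := 3) (j := 2) ?_ ?_ (by omega) ?_,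
    fun ⟨j, hj⟩ => collide (s := 2) (i := j) (t := 3) (j := 2) ?_ ?_ (by omega) ?_⟩
  all_goals
    simp only [mem_coords, armLength, excess_succ_self_two_one, excess_succ_self_two_two,
      excess_succ_self_two_three_one, excess_succ_self_two_three_two]
    norm_num
  all_goals first
    | constructor <;> nlinarith
    | exact_mod_cast hi.symm
    | exact_mod_cast hj.symm

end SuccSelfTwo

end Starlike

/-- for any even `n ≥ 14`, the starlike tree `S(n/2 - 1, n/2 - 2, 2)` is
transmission irregular iff none of `4n - 15`, `4n - 7`, `8n - 23`, `8n - 15` is a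
perfect square. -/
theorem starlike_TI_iff_even (n : ℕ) (heven : Even n) (hn : 14 ≤ n) :
    TransIrregular (starlike (n / 2 - 1) (n / 2 - 2) 2) ↔
      (¬ IsPerfectSquare (4 * n - 15) ∧ ¬ IsPerfectSquare (4 * n - 7) ∧
        ¬ IsPerfectSquare (8 * n - 23) ∧ ¬ IsPerfectSquare (8 * n - 15)) := by
  obtain ⟨b, rfl⟩ : ∃ b, n = 2 * b + 4 := ⟨n / 2 - 2, by obtain ⟨k, rfl⟩ := heven; omega⟩
  rw [show (2 * b + 4) / 2 - 1 = b + 1 by omega, show (2 * b + 4) / 2 - 2 = b by omega,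
    Starlike.transIrregular_iff_injOn (by omega),
    Starlike.injOn_excess_succ_self_two_iff (by omega),
    show 4 * (2 * b + 4) - 15 = 4 * (2 * b) + 1 by omega,
    show 4 * (2 * b + 4) - 7 = 4 * (2 * b) + 9 by omega,
    show 8 * (2 * b + 4) - 23 = 4 * (4 * b + 2) + 1 by omega,
    show 8 * (2 * b + 4) - 15 = 4 * (4 * b + 2) + 9 by omega,
    isPerfectSquare_four_mul_add_one_iff, isPerfectSquare_four_mul_add_nine_iff,
    isPerfectSquare_four_mul_add_one_iff, isPerfectSquare_four_mul_add_nine_iff]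
end
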